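/- arXiv:1112.2749 — 4 statements merged into one kernel-verified Lean document; each statement's English description precedes it below -/
import Mathlib

section
/- If v(t,x,y) = (x+y)^p u(t, y/(x+y)) with u ∈ C^{1,2}, then the second-order HJB operator transforms as: -v_t + L v = (x+y)^p [-u_t(t,z) + D u(t,z)], where z = y/(x+y), (L v)(t,x,y) = -½σ²y²v_yy - μy v_y - rx v_x + βv, and (D u)(t,z) = -p(A - ½σ²(1-p)(z-θ)²)u + (1-p)σ²z(1-z)(z-θ)u_z - ½σ²z²(1-z)²u_zz. -/
/-!
`v = (x + y)^p u(t, z)` with `z = y / (x + y)` is homogeneous of degree `p` in `(x, y)`, and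
differentiating a degree-`q` homogeneous function keeps it homogeneous: by the chain rule with
`∂z/∂y = (1 - z)/(x + y)` and `∂z/∂x = -z/(x + y)`, its `y`-derivative is the degree-`(q - 1)`
function with profile `q f + (1 - z) f'`, and its `x`-derivative has profile `q f - z f'`.
Applying the `y`-rule twice gives `v_yy`. Since `x = (1 - z)(x + y)` and `y = z (x + y)`, all
terms of `-v_t + L v` then carry the factor `(x + y)^p`, and what remains is a polynomial
identity in `z` once `μ = r + (1 - p) σ² θ` and the definition of `A` are substituted.
-/

open Real Set

/-- The degree-`q` homogeneous function of `(x, y)` with profile `f` on the line `x + y = 1`. -/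
noncomputable def homogExt (q : ℝ) (f : ℝ → ℝ) (x y : ℝ) : ℝ := (x + y) ^ q * f (y / (x + y))

section homogExt

variable {q x y f' : ℝ} {f : ℝ → ℝ}

theorem hasDerivAt_homogExt_right (hxy : 0 < x + y) (hf : HasDerivAt f f' (y / (x + y))) :
    HasDerivAt (homogExt q f x)
      ((x + y) ^ (q - 1) * (q * f (y / (x + y)) + (1 - y / (x + y)) * f')) y := by
  have hs : HasDerivAt (fun w => x + w) 1 y := (hasDerivAt_id y).const_add x
  have hz : HasDerivAt (fun w => w / (x + w)) (x / (x + y) ^ 2) y :=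
    ((hasDerivAt_id y).div hs hxy.ne').congr_deriv (by simp)
  refine ((hs.rpow_const (p := q) (Or.inl hxy.ne')).mul (hf.comp y hz)).congr_deriv ?_
  rw [Function.comp_apply, rpow_sub_one hxy.ne']
  field_simp
  ring

theorem hasDerivAt_homogExt_left (hxy : 0 < x + y) (hf : HasDerivAt f f' (y / (x + y))) :
    HasDerivAt (fun x' => homogExt q f x' y)
      ((x + y) ^ (q - 1) * (q * f (y / (x + y)) - y / (x + y) * f')) x := by
  have hs : HasDerivAt (fun w => w + y) 1 x := (hasDerivAt_id x).add_const y
  have hz : HasDerivAt (fun w => y / (w + y)) (-y / (x + y) ^ 2) x :=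
    ((hasDerivAt_const x y).div hs hxy.ne').congr_deriv (by simp)
  refine ((hs.rpow_const (p := q) (Or.inl hxy.ne')).mul (hf.comp x hz)).congr_deriv ?_
  rw [Function.comp_apply, rpow_sub_one hxy.ne']
  field_simp
  ring

theorem hasDerivAt_deriv_homogExt_right {U : Set ℝ} (hU : IsOpen U) {f' : ℝ → ℝ} {f'' : ℝ}
    (hxy : 0 < x + y) (hzU : y / (x + y) ∈ U) (hf : ∀ z ∈ U, HasDerivAt f (f' z) z)
    (hf' : HasDerivAt f' f'' (y / (x + y))) :
    HasDerivAt (deriv (homogExt q f x))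
      ((x + y) ^ (q - 1 - 1) *
        ((q - 1) * (q * f (y / (x + y)) + (1 - y / (x + y)) * f' (y / (x + y)))
          + (1 - y / (x + y)) * ((q - 1) * f' (y / (x + y)) + (1 - y / (x + y)) * f''))) y := by
  set g : ℝ → ℝ := fun z => q * f z + (1 - z) * f' z
  have hg : HasDerivAt g ((q - 1) * f' (y / (x + y)) + (1 - y / (x + y)) * f'') (y / (x + y)) :=
    (((hf _ hzU).const_mul q).add (((hasDerivAt_id _).const_sub 1).mul hf')).congr_deriv
      (by ring)
  have hnear : ∀ᶠ w in nhds y, 0 < x + w ∧ w / (x + w) ∈ U := by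
    have hcont : ContinuousAt (fun w => w / (x + w)) y :=
      continuousAt_id.div (continuousAt_const.add continuousAt_id) hxy.ne'
    exact ((continuousAt_const.add continuousAt_id).eventually (lt_mem_nhds hxy)).and
      (hcont.eventually (hU.mem_nhds hzU))
  have hderiv : deriv (homogExt q f x) =ᶠ[nhds y] homogExt (q - 1) g x := by
    filter_upwards [hnear] with w ⟨hw, hwU⟩
    exact (hasDerivAt_homogExt_right hw (hf _ hwU)).deriv
  exact (hasDerivAt_homogExt_right hxy hg).congr_of_eventuallyEq hderiv

end homogExt

theorem stmt2_general (p lam T mu0 r sig be th A : ℝ) (hp1 : p < 1) (hp0 : p ≠ 0)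
    (hsig : 0 < sig)
    (hth : th = (mu0 - r) / ((1 - p) * sig ^ 2))
    (hA : A = r - be / p + (mu0 - r) * th - (1/2) * (1 - p) * sig ^ 2 * th ^ 2)
    (u ut uz uzz : ℝ → ℝ → ℝ)
    (hut : ∀ t ∈ Icc (0:ℝ) T, ∀ z ∈ Ioo (-(1/lam)) (1/lam),
      HasDerivAt (fun s => u s z) (ut t z) t)
    (huz : ∀ t ∈ Icc (0:ℝ) T, ∀ z ∈ Ioo (-(1/lam)) (1/lam),
      HasDerivAt (u t) (uz t z) z)
    (huzz : ∀ t ∈ Icc (0:ℝ) T, ∀ z ∈ Ioo (-(1/lam)) (1/lam),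
      HasDerivAt (uz t) (uzz t z) z)
    (v : ℝ → ℝ → ℝ → ℝ)
    (hv : ∀ t x y, v t x y = (x + y) ^ p * u t (y / (x + y)))
    (t x y : ℝ) (ht : t ∈ Icc (0:ℝ) T) (hxy : 0 < x + y)
    (hz : y / (x + y) ∈ Ioo (-(1/lam)) (1/lam)) :
    -(deriv (fun s => v s x y) t)
      + (-(1/2) * sig ^ 2 * y ^ 2 * deriv (fun y' => deriv (fun y'' => v t x y'') y') y
          - mu0 * y * deriv (fun y' => v t x y') y
          - r * x * deriv (fun x' => v t x' y) x
          + be * v t x y)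
      = (x + y) ^ p *
          (-(ut t (y / (x + y)))
            + (-p * (A - (1/2) * sig ^ 2 * (1 - p) * (y / (x + y) - th) ^ 2)
                  * u t (y / (x + y))
                + (1 - p) * sig ^ 2 * (y / (x + y)) * (1 - y / (x + y))
                    * (y / (x + y) - th) * uz t (y / (x + y))
                - (1/2) * sig ^ 2 * (y / (x + y)) ^ 2 * (1 - y / (x + y)) ^ 2
                    * uzz t (y / (x + y)))) := by
  have hvt : v t x = homogExt p (u t) x := funext (hv t x)
  have hdt : deriv (fun s => v s x y) t = (x + y) ^ p * ut t (y / (x + y)) := by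
    simp only [hv]
    exact ((hut t ht _ hz).const_mul _).deriv
  have hdx := (hasDerivAt_homogExt_left (q := p) hxy (huz t ht _ hz)).deriv
  have hdy := (hasDerivAt_homogExt_right (q := p) hxy (huz t ht _ hz)).deriv
  have hdyy := (hasDerivAt_deriv_homogExt_right (q := p) isOpen_Ioo hxy hz
    (huz t ht) (huzz t ht _ hz)).deriv
  have hmu : mu0 = r + (1 - p) * sig ^ 2 * th := by
    rw [hth, mul_div_cancel₀]
    · ring
    · have : 1 - p ≠ 0 := by linarith
      positivity
  have hvx : (fun x' => v t x' y) = fun x' => homogExt p (u t) x' y := funext (hv t · y)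
  rw [hdt, hvx, hdx, hvt, hdy, hdyy, homogExt, hA, hmu]
  simp only [rpow_sub_one hxy.ne']
  field_simp
  ring

/-- Transformation of the second-order HJB operator: if
`v(t,x,y) = (x+y)^p u(t, y/(x+y))` with `u ∈ C^{1,2}`, then
`-v_t + L v = (x+y)^p [-u_t + D u]` at `z = y/(x+y)`, where
`(L v) = -½σ²y²v_yy - μy v_y - rx v_x + βv` and
`(D u) = -p(A - ½σ²(1-p)(z-θ)²)u + (1-p)σ²z(1-z)(z-θ)u_z - ½σ²z²(1-z)²u_zz`. -/
theorem stmt2 (p lam T mu0 r sig be th A : ℝ) (hp1 : p < 1) (hp0 : p ≠ 0)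
    (hlam : lam ∈ Ioo (0:ℝ) 1) (hT : 0 < T) (hsig : 0 < sig)
    (hth : th = (mu0 - r) / ((1 - p) * sig ^ 2))
    (hA : A = r - be / p + (mu0 - r) * th - (1/2) * (1 - p) * sig ^ 2 * th ^ 2)
    (u ut uz uzz : ℝ → ℝ → ℝ)
    (hut : ∀ t ∈ Icc (0:ℝ) T, ∀ z ∈ Ioo (-(1/lam)) (1/lam),
      HasDerivAt (fun s => u s z) (ut t z) t)
    (huz : ∀ t ∈ Icc (0:ℝ) T, ∀ z ∈ Ioo (-(1/lam)) (1/lam),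
      HasDerivAt (u t) (uz t z) z)
    (huzz : ∀ t ∈ Icc (0:ℝ) T, ∀ z ∈ Ioo (-(1/lam)) (1/lam),
      HasDerivAt (uz t) (uzz t z) z)
    (v : ℝ → ℝ → ℝ → ℝ)
    (hv : ∀ t x y, v t x y = (x + y) ^ p * u t (y / (x + y)))
    (t x y : ℝ) (ht : t ∈ Icc (0:ℝ) T) (hxy : 0 < x + y)
    (hz : y / (x + y) ∈ Ioo (-(1/lam)) (1/lam)) :
    -(deriv (fun s => v s x y) t)
      + (-(1/2) * sig ^ 2 * y ^ 2 * deriv (fun y' => deriv (fun y'' => v t x y'') y') y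
          - mu0 * y * deriv (fun y' => v t x y') y
          - r * x * deriv (fun x' => v t x' y) x
          + be * v t x y)
      = (x + y) ^ p *
          (-(ut t (y / (x + y)))
            + (-p * (A - (1/2) * sig ^ 2 * (1 - p) * (y / (x + y) - th) ^ 2)
                  * u t (y / (x + y))
                + (1 - p) * sig ^ 2 * (y / (x + y)) * (1 - y / (x + y))
                    * (y / (x + y) - th) * uz t (y / (x + y))
                - (1/2) * sig ^ 2 * (y / (x + y)) ^ 2 * (1 - y / (x + y)) ^ 2
                    * uzz t (y / (x + y)))) :=
  stmt2_general p lam T mu0 r sig be th A hp1 hp0 hsig hth hA u ut uz uzz hut huz huzz v hv t x y ht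
    hxy hz
end

section
/- (Smoothness of implicit free boundary) With f₁ as in the free-boundary equation, at δ = -(ν/2)λ^{1/3}(1 - ξ(t)λ^{1/3}) + o(λ^{2/3}) the partial derivative ∂f₁/∂δ = 3λ^{2/3} - 12δ²/ν² + O(λ^{4/3}) = 6ξ(t)λ + o(λ), which is nonzero for λ small; hence by the implicit function theorem the root δ₁(t) is continuously differentiable in t with dδ₁/dt = O(λ^{2/3}). -/
/-!
Write `f₁(t, δ) = v(t) + g(δ)`, the exponentials in the `t`-part cancelling. With `x = λ^{1/3}`
and a point `δ = -(ν/2)x(1 - ξx) + ρx²` of the branch, the `O(λ^{2/3})` terms of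
`g'(δ) = (1-p)λh'(δ) + (1+(θ+δ)λ)h''(δ)` cancel exactly, leaving
`g'(δ) = 6ξx³ + (12/ν)ρx³ + x⁴ R(x, ξ, ρ)` with `R` a polynomial, hence bounded on a compact box.
So `g'(δ) = 6ξλ + o(λ) ≥ 5λ` since `ξ ≥ 1`. The inverse function theorem for `g` turns
`v(t) + g(δ₁(t)) = 0` into `δ₁' = -v'/g'(δ₁)`, and `v' = O(λ^{5/3})`.
-/

open Real Set

/-- `h(δ) = (3/2)δ²λ^{2/3} - δ⁴/ν² + (3/2)Bδ²λ^{4/3}`. -/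
noncomputable def hFn (nu B lam δ : ℝ) : ℝ :=
  (3/2) * δ ^ 2 * lam ^ ((2:ℝ)/3) - δ ^ 4 / nu ^ 2 + (3/2) * B * δ ^ 2 * lam ^ ((4:ℝ)/3)

/-- `h'(δ) = 3δλ^{2/3} - 4δ³/ν² + 3Bδλ^{4/3}`. -/
noncomputable def hFn' (nu B lam δ : ℝ) : ℝ :=
  3 * δ * lam ^ ((2:ℝ)/3) - 4 * δ ^ 3 / nu ^ 2 + 3 * B * δ * lam ^ ((4:ℝ)/3)

/-- `f₁(t,δ) = νλ - pνγ₂(t)e^{-pA(T-t)}λ^{5/3} ± pνM e^{-pA(T-t)}λ² - p h(δ)λ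
  + (1+(θ+δ)λ) h'(δ)`, with `γ₂(t) = γ₂ e^{pA(T-t)}(T-t)`. -/
noncomputable def f1FB (p A T gamma2 M e nu B th lam t δ : ℝ) : ℝ :=
  nu * lam
    - p * nu * (gamma2 * exp (p * A * (T - t)) * (T - t)) * exp (-(p * A * (T - t)))
        * lam ^ ((5:ℝ)/3)
    + e * p * nu * M * exp (-(p * A * (T - t))) * lam ^ 2
    - p * hFn nu B lam δ * lam
    + (1 + (th + δ) * lam) * hFn' nu B lam δ

/-- `ξ(t) = √((2/3)p(T-t)γ₂ + B)`. -/
noncomputable def xiFB (p T gamma2 B t : ℝ) : ℝ := Real.sqrt ((2/3) * p * (T - t) * gamma2 + B)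

open Filter Topology

theorem hasDerivWithinAt_of_add_comp_eq_zero {g v δ : ℝ → ℝ} {s : Set ℝ} {t g' v' : ℝ}
    (hg : HasStrictDerivAt g g' (δ t)) (hg' : g' ≠ 0) (hv : HasDerivWithinAt v v' s t)
    (hδ : ContinuousWithinAt δ s t) (hroot : ∀ u ∈ s, v u + g (δ u) = 0) (ht : t ∈ s) :
    HasDerivWithinAt δ (-v' / g') s t := by
  set φ := hg.localInverse g g' (δ t) hg'
  have hφ : HasStrictDerivAt φ g'⁻¹ (-v t) := by
    simpa [eq_neg_of_add_eq_zero_right (hroot t ht)] using hg.to_localInverse hg'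
  have hδφ : δ =ᶠ[𝓝[s] t] fun u => φ (-v u) := by
    filter_upwards [hδ.eventually (hg.eventually_left_inverse hg'), self_mem_nhdsWithin]
      with u hu hus
    rw [← hu, ← eq_neg_of_add_eq_zero_right (hroot u hus)]
  have := hφ.hasDerivAt.comp_hasDerivWithinAt t hv.neg
  rw [div_eq_inv_mul]
  exact this.congr_of_eventuallyEq hδφ (hδφ.eq_of_nhdsWithin ht)

theorem cube_rpow_natCast_div_three {x : ℝ} (hx : 0 ≤ x) (n : ℕ) :
    (x ^ 3) ^ ((n : ℝ) / 3) = x ^ n := by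
  rw [← Real.rpow_natCast x 3, ← Real.rpow_mul hx, ← Real.rpow_natCast]
  congr 1
  push_cast
  ring

theorem exists_eq_cube_of_nonneg {lam : ℝ} (hlam : 0 ≤ lam) : ∃ x, 0 ≤ x ∧ lam = x ^ 3 :=
  ⟨lam ^ ((1:ℝ)/3), by positivity, by
    rw [← Real.rpow_natCast, ← Real.rpow_mul hlam]; norm_num⟩

noncomputable def hFn'' (nu B lam δ : ℝ) : ℝ :=
  3 * lam ^ ((2:ℝ)/3) - 12 * δ ^ 2 / nu ^ 2 + 3 * B * lam ^ ((4:ℝ)/3)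

noncomputable def f1TimePart (p A T gamma2 M e nu lam t : ℝ) : ℝ :=
  nu * lam - p * nu * gamma2 * (T - t) * lam ^ ((5:ℝ)/3)
    + e * p * nu * M * exp (-(p * A * (T - t))) * lam ^ 2

noncomputable def f1DeltaPart (p nu B th lam δ : ℝ) : ℝ :=
  -(p * hFn nu B lam δ * lam) + (1 + (th + δ) * lam) * hFn' nu B lam δ

noncomputable def f1DeltaDeriv (p nu B th lam δ : ℝ) : ℝ :=
  (1 - p) * lam * hFn' nu B lam δ + (1 + (th + δ) * lam) * hFn'' nu B lam δ

theorem f1FB_eq_add (p A T gamma2 M e nu B th lam t δ : ℝ) :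
    f1FB p A T gamma2 M e nu B th lam t δ
      = f1TimePart p A T gamma2 M e nu lam t + f1DeltaPart p nu B th lam δ := by
  have h := Real.exp_add (p * A * (T - t)) (-(p * A * (T - t)))
  rw [add_neg_cancel, Real.exp_zero] at h
  unfold f1FB f1TimePart f1DeltaPart
  linear_combination (p * nu * gamma2 * (T - t) * lam ^ ((5:ℝ)/3)) * h

section DeltaDerivative

variable (p nu B th lam d : ℝ)

theorem hasStrictDerivAt_hFn : HasStrictDerivAt (hFn nu B lam) (hFn' nu B lam d) d := by
  have h2 := hasStrictDerivAt_pow 2 d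
  exact ((((h2.const_mul (3/2)).mul_const (lam ^ ((2:ℝ)/3))).sub
    ((hasStrictDerivAt_pow 4 d).div_const (nu ^ 2))).add
    ((h2.const_mul (3/2 * B)).mul_const (lam ^ ((4:ℝ)/3)))).congr_deriv
    (by simp only [hFn']; push_cast; ring)

theorem hasStrictDerivAt_hFn' : HasStrictDerivAt (hFn' nu B lam) (hFn'' nu B lam d) d := by
  have h1 := hasStrictDerivAt_id d
  exact ((((h1.const_mul 3).mul_const (lam ^ ((2:ℝ)/3))).sub
    (((hasStrictDerivAt_pow 3 d).const_mul 4).div_const (nu ^ 2))).add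
    ((h1.const_mul (3 * B)).mul_const (lam ^ ((4:ℝ)/3)))).congr_deriv
    (by simp only [hFn'']; push_cast; ring)

theorem hasStrictDerivAt_f1DeltaPart :
    HasStrictDerivAt (f1DeltaPart p nu B th lam) (f1DeltaDeriv p nu B th lam d) d := by
  have hlin : HasStrictDerivAt (fun δ => 1 + (th + δ) * lam) lam d := by
    simpa using (((hasStrictDerivAt_id d).const_add th).mul_const lam).const_add 1
  exact ((((hasStrictDerivAt_hFn nu B lam d).const_mul p).mul_const lam).neg.add
    (hlin.mul (hasStrictDerivAt_hFn' nu B lam d))).congr_deriv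
    (by simp only [f1DeltaDeriv]; ring)

theorem deriv_f1FB (A T gamma2 M e t : ℝ) :
    deriv (fun δ => f1FB p A T gamma2 M e nu B th lam t δ) d = f1DeltaDeriv p nu B th lam d := by
  simp only [f1FB_eq_add]
  exact ((hasStrictDerivAt_f1DeltaPart p nu B th lam d).const_add _).hasDerivAt.deriv

end DeltaDerivative

noncomputable def f1DeltaDerivRemainder (p nu B th x ξ ρ : ℝ) : ℝ :=
  let u := ρ * x - nu / 2 * (1 - ξ * x)
  (1 - p) * x ^ 2 * (3 * u - 4 * u ^ 3 / nu ^ 2 + 3 * B * u * x ^ 2)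
    + (th * x + u * x ^ 2) * (3 - 12 * u ^ 2 / nu ^ 2 + 3 * B * x ^ 2)
    + 3 * B - 3 * ξ ^ 2 - 12 * ξ * ρ / nu - 12 * ρ ^ 2 / nu ^ 2

theorem f1DeltaDeriv_cube_branch (p nu B th : ℝ) (hnu : nu ≠ 0) {x : ℝ} (hx : 0 ≤ x)
    (ξ ρ : ℝ) :
    f1DeltaDeriv p nu B th (x ^ 3) (-(nu / 2) * x * (1 - ξ * x) + ρ * x ^ 2)
      = 6 * ξ * x ^ 3 + 12 / nu * ρ * x ^ 3 + x ^ 4 * f1DeltaDerivRemainder p nu B th x ξ ρ := by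
  have h2 : (x ^ 3) ^ ((2:ℝ) / 3) = x ^ 2 := by exact_mod_cast cube_rpow_natCast_div_three hx 2
  have h4 : (x ^ 3) ^ ((4:ℝ) / 3) = x ^ 4 := by exact_mod_cast cube_rpow_natCast_div_three hx 4
  simp only [f1DeltaDeriv, f1DeltaDerivRemainder, hFn', hFn'', h2, h4]
  field_simp
  ring

theorem continuous_f1DeltaDerivRemainder (p nu B th : ℝ) :
    Continuous fun q : ℝ × ℝ × ℝ => f1DeltaDerivRemainder p nu B th q.1 q.2.1 q.2.2 := by
  unfold f1DeltaDerivRemainder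
  fun_prop

theorem abs_f1DeltaDeriv_sub_le (p nu B th : ℝ) (hnu : 0 < nu) (K : ℝ) {ε : ℝ} (hε : 0 < ε) :
    ∃ ε' > 0, ∃ lam0 > 0, ∀ lam ∈ Ioo (0:ℝ) lam0, ∀ ξ ∈ Icc (-K) K, ∀ d : ℝ,
      |d + (nu / 2) * lam ^ ((1:ℝ)/3) * (1 - ξ * lam ^ ((1:ℝ)/3))| ≤ ε' * lam ^ ((2:ℝ)/3) →
      |f1DeltaDeriv p nu B th lam d - 6 * ξ * lam| ≤ ε * lam := by
  obtain ⟨C, hC⟩ :=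
    (isCompact_Icc.prod (isCompact_Icc.prod isCompact_Icc)).exists_bound_of_continuousOn
      (s := Icc 0 1 ×ˢ Icc (-K) K ×ˢ Icc (-1) 1)
      (continuous_f1DeltaDerivRemainder p nu B th).continuousOn
  set C' := max C 1
  have hC' : 0 < C' := lt_max_of_lt_right one_pos
  refine ⟨min (ε * nu / 24) 1, by positivity, min 1 ((ε / (2 * C')) ^ 3), by positivity, ?_⟩
  rintro lam ⟨hlam0, hlam⟩ ξ hξ d hd
  obtain ⟨x, hx0, rfl⟩ := exists_eq_cube_of_nonneg hlam0.le
  have hx : 0 < x := hx0.lt_of_ne (by rintro rfl; simp at hlam0)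
  have h1 : (x ^ 3) ^ ((1:ℝ) / 3) = x := by simpa using cube_rpow_natCast_div_three hx0 1
  have h2 : (x ^ 3) ^ ((2:ℝ) / 3) = x ^ 2 := by exact_mod_cast cube_rpow_natCast_div_three hx0 2
  rw [h1, h2] at hd
  have hx1 : x ≤ 1 := (lt_of_pow_lt_pow_left₀ 3 zero_le_one
    (by simpa using hlam.trans_le (min_le_left _ _))).le
  have hxC : x ≤ ε / (2 * C') := (lt_of_pow_lt_pow_left₀ 3 (by positivity)
    (hlam.trans_le (min_le_right _ _))).le
  set ρ := (d + nu / 2 * x * (1 - ξ * x)) / x ^ 2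
  have hρ : |ρ| ≤ min (ε * nu / 24) 1 := by
    rw [abs_div, abs_of_pos (by positivity : (0:ℝ) < x ^ 2), div_le_iff₀ (by positivity)]
    exact hd
  have hd' : d = -(nu / 2) * x * (1 - ξ * x) + ρ * x ^ 2 := by
    simp only [ρ]; field_simp; ring
  have hR : |f1DeltaDerivRemainder p nu B th x ξ ρ| ≤ C' :=
    (hC (x, ξ, ρ) ⟨⟨hx0, hx1⟩, hξ, abs_le.mp (hρ.trans (min_le_right _ _))⟩).trans
      (le_max_left _ _)
  rw [hd', f1DeltaDeriv_cube_branch p nu B th hnu.ne' hx0]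
  calc |6 * ξ * x ^ 3 + 12 / nu * ρ * x ^ 3 + x ^ 4 * f1DeltaDerivRemainder p nu B th x ξ ρ
        - 6 * ξ * x ^ 3|
      ≤ 12 / nu * |ρ| * x ^ 3 + x * |f1DeltaDerivRemainder p nu B th x ξ ρ| * x ^ 3 := by
        rw [add_sub_right_comm, add_sub_cancel_left]
        refine (abs_add_le _ _).trans_eq ?_
        rw [abs_mul, abs_mul, abs_mul, abs_of_pos (by positivity : (0:ℝ) < 12 / nu),
          abs_of_pos (pow_pos hx 3), abs_of_pos (pow_pos hx 4)]
        ring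
    _ ≤ 12 / nu * (ε * nu / 24) * x ^ 3 + ε / (2 * C') * C' * x ^ 3 := by
        gcongr
        exact hρ.trans (min_le_left _ _)
    _ = ε * x ^ 3 := by field_simp; ring

theorem abs_f1DeltaDeriv_sub_le_of_mem_Icc (p T gamma2 nu B th : ℝ) (hnu : 0 < nu) {ε : ℝ}
    (hε : 0 < ε) :
    ∃ ε' > 0, ∃ lam0 > 0, ∀ lam ∈ Ioo (0:ℝ) lam0, ∀ t ∈ Icc (0:ℝ) T, ∀ d : ℝ,
      |d + (nu / 2) * lam ^ ((1:ℝ)/3) * (1 - xiFB p T gamma2 B t * lam ^ ((1:ℝ)/3))|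
          ≤ ε' * lam ^ ((2:ℝ)/3) →
      |f1DeltaDeriv p nu B th lam d - 6 * xiFB p T gamma2 B t * lam| ≤ ε * lam := by
  obtain ⟨K, hK⟩ := isCompact_Icc.exists_bound_of_continuousOn
    (by unfold xiFB; fun_prop : Continuous (xiFB p T gamma2 B)).continuousOn
  obtain ⟨ε', hε', lam0, hlam0, h⟩ := abs_f1DeltaDeriv_sub_le p nu B th hnu K hε
  exact ⟨ε', hε', lam0, hlam0, fun lam hlam t ht => h lam hlam _ (abs_le.mp (hK t ht))⟩

theorem exists_hasDerivAt_f1TimePart_le (p A T gamma2 M e nu : ℝ) :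
    ∃ C > 0, ∀ lam ∈ Icc (0:ℝ) 1, ∀ t ∈ Icc (0:ℝ) T, ∃ v',
      HasDerivAt (f1TimePart p A T gamma2 M e nu lam) v' t ∧ |v'| ≤ C * lam ^ ((5:ℝ)/3) := by
  set w : ℝ × ℝ → ℝ := fun q =>
    p * nu * gamma2 + e * p * nu * M * (p * A) * exp (-(p * A * (T - q.1))) * q.2
  obtain ⟨C, hC⟩ := (isCompact_Icc.prod isCompact_Icc).exists_bound_of_continuousOn
    (s := Icc 0 T ×ˢ Icc 0 1) (by fun_prop : Continuous w).continuousOn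
  refine ⟨max C 1, lt_max_of_lt_right one_pos, ?_⟩
  rintro lam ⟨hlam0, hlam1⟩ t ht
  obtain ⟨x, hx0, rfl⟩ := exists_eq_cube_of_nonneg hlam0
  have hx1 : x ≤ 1 := pow_le_one_iff_of_nonneg hx0 three_ne_zero |>.mp hlam1
  have h5 : (x ^ 3) ^ ((5:ℝ) / 3) = x ^ 5 := by exact_mod_cast cube_rpow_natCast_div_three hx0 5
  have hexp := ((((hasDerivAt_id t).const_sub T).const_mul (p * A)).neg).exp
  have hv := (((((hasDerivAt_id t).const_sub T).const_mul (p * nu * gamma2)).mul_const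
    ((x ^ 3) ^ ((5:ℝ)/3))).const_sub (nu * x ^ 3)).add
    ((hexp.const_mul (e * p * nu * M)).mul_const ((x ^ 3) ^ 2))
  refine ⟨x ^ 5 * w (t, x), hv.congr_deriv (by simp only [w, h5, Pi.neg_apply, id]; ring), ?_⟩
  rw [h5, abs_mul, abs_of_nonneg (by positivity), mul_comm]
  exact mul_le_mul_of_nonneg_right ((hC (t, x) ⟨ht, hx0, hx1⟩).trans (le_max_left _ _))
    (by positivity)

theorem five_mul_le_of_abs_sub_le {D ξ lam ε : ℝ} (hξ : 1 ≤ ξ) (hlam : 0 < lam) (hε : ε ≤ 1)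
    (h : |D - 6 * ξ * lam| ≤ ε * lam) : 5 * lam ≤ D := by
  nlinarith [(abs_le.mp h).1]

theorem abs_neg_div_le_of_five_mul_le {v D lam C : ℝ} (hlam : 0 < lam) (hD : 5 * lam ≤ D)
    (hv : |v| ≤ C * lam ^ ((5:ℝ)/3)) : |-v / D| ≤ C / 5 * lam ^ ((2:ℝ)/3) := by
  have hD0 : 0 < D := by linarith
  have h53 : lam ^ ((5:ℝ)/3) = lam ^ ((2:ℝ)/3) * lam := by
    rw [← Real.rpow_add_one hlam.ne']; norm_num
  have hC : 0 ≤ C := nonneg_of_mul_nonneg_left ((abs_nonneg v).trans hv) (by positivity)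
  rw [abs_div, abs_neg, abs_of_pos hD0, div_le_iff₀ hD0]
  calc |v| ≤ C / 5 * lam ^ ((2:ℝ)/3) * (5 * lam) := by rw [h53] at hv; linarith
    _ ≤ C / 5 * lam ^ ((2:ℝ)/3) * D := by gcongr

theorem stmt8_general (p A T gamma2 M e nu B th : ℝ)
    (hnu : 0 < nu)
    (hxi : ∀ t ∈ Icc (0:ℝ) T, 1 ≤ (2/3) * p * (T - t) * gamma2 + B) :
    (∀ ε > 0, ∃ ε' > 0, ∃ lam0 > 0, ∀ lam ∈ Ioo (0:ℝ) lam0, ∀ t ∈ Icc (0:ℝ) T,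
      ∀ d : ℝ,
        |d + (nu/2) * lam ^ ((1:ℝ)/3) * (1 - xiFB p T gamma2 B t * lam ^ ((1:ℝ)/3))|
            ≤ ε' * lam ^ ((2:ℝ)/3) →
        |deriv (fun δ => f1FB p A T gamma2 M e nu B th lam t δ) d
            - 6 * xiFB p T gamma2 B t * lam| ≤ ε * lam ∧
        deriv (fun δ => f1FB p A T gamma2 M e nu B th lam t δ) d ≠ 0) ∧
    ∃ C > 0, ∃ ε' > 0, ∃ lam0 > 0, ∀ lam ∈ Ioo (0:ℝ) lam0, ∀ δ₁ : ℝ → ℝ,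
      ContinuousOn δ₁ (Icc 0 T) →
      (∀ t ∈ Icc (0:ℝ) T,
        f1FB p A T gamma2 M e nu B th lam t (δ₁ t) = 0 ∧
        |δ₁ t + (nu/2) * lam ^ ((1:ℝ)/3) * (1 - xiFB p T gamma2 B t * lam ^ ((1:ℝ)/3))|
          ≤ ε' * lam ^ ((2:ℝ)/3)) →
      ∀ t ∈ Icc (0:ℝ) T, ∃ d : ℝ,
        HasDerivWithinAt δ₁ d (Icc 0 T) t ∧ |d| ≤ C * lam ^ ((2:ℝ)/3) := by
  have hξ : ∀ t ∈ Icc (0:ℝ) T, 1 ≤ xiFB p T gamma2 B t := fun t ht => one_le_sqrt.mpr (hxi t ht)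
  simp only [deriv_f1FB]
  constructor
  · intro ε hε
    obtain ⟨ε', hε', lam0, hlam0, hD⟩ :=
      abs_f1DeltaDeriv_sub_le_of_mem_Icc p T gamma2 nu B th hnu (lt_min hε one_pos)
    refine ⟨ε', hε', lam0, hlam0, fun lam hlam t ht d hd => ?_⟩
    have h := hD lam hlam t ht d hd
    have h5 := five_mul_le_of_abs_sub_le (hξ t ht) hlam.1 (min_le_right _ _) h
    exact ⟨h.trans (mul_le_mul_of_nonneg_right (min_le_left _ _) hlam.1.le),
      ((mul_pos (by norm_num : (0:ℝ) < 5) hlam.1).trans_le h5).ne'⟩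
  · obtain ⟨Cv, hCv, hv⟩ := exists_hasDerivAt_f1TimePart_le p A T gamma2 M e nu
    obtain ⟨ε', hε', lam0, hlam0, hD⟩ :=
      abs_f1DeltaDeriv_sub_le_of_mem_Icc p T gamma2 nu B th hnu one_pos
    refine ⟨Cv / 5, by positivity, ε', hε', min lam0 1, lt_min hlam0 one_pos, ?_⟩
    rintro lam ⟨hlam, hlam'⟩ δ₁ hδ₁ hroot t ht
    obtain ⟨v', hv', hv'le⟩ := hv lam ⟨hlam.le, (hlam'.trans_le (min_le_right _ _)).le⟩ t ht
    have hD5 := five_mul_le_of_abs_sub_le (hξ t ht) hlam le_rfl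
      (hD lam ⟨hlam, hlam'.trans_le (min_le_left _ _)⟩ t ht _ (hroot t ht).2)
    have hD0 : f1DeltaDeriv p nu B th lam (δ₁ t) ≠ 0 :=
      ((mul_pos (by norm_num : (0:ℝ) < 5) hlam).trans_le hD5).ne'
    refine ⟨_, hasDerivWithinAt_of_add_comp_eq_zero
      (hasStrictDerivAt_f1DeltaPart p nu B th lam (δ₁ t)) hD0 hv'.hasDerivWithinAt (hδ₁ t ht)
      (fun u hu => (f1FB_eq_add ..).symm.trans (hroot u hu).1) ht,
      abs_neg_div_le_of_five_mul_le hlam hD5 hv'le⟩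

/-- Smoothness of the implicit free boundary: near
`δ = -(ν/2)λ^{1/3}(1-ξ(t)λ^{1/3}) + o(λ^{2/3})` the partial `∂f₁/∂δ = 6ξ(t)λ + o(λ)`
(hence nonzero for small `λ`), and any continuous root branch `δ₁(t)` of that form is
continuously differentiable with `dδ₁/dt = O(λ^{2/3})`. -/
theorem stmt8 (p A T gamma2 M e nu B th : ℝ)
    (hp1 : p < 1) (hp0 : p ≠ 0) (hT : 0 < T) (hnu : 0 < nu) (hM : 0 < M)
    (hth : 0 < th) (he : e = 1 ∨ e = -1)
    (hxi : ∀ t ∈ Icc (0:ℝ) T, 1 ≤ (2/3) * p * (T - t) * gamma2 + B) :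
    (∀ ε > 0, ∃ ε' > 0, ∃ lam0 > 0, ∀ lam ∈ Ioo (0:ℝ) lam0, ∀ t ∈ Icc (0:ℝ) T,
      ∀ d : ℝ,
        |d + (nu/2) * lam ^ ((1:ℝ)/3) * (1 - xiFB p T gamma2 B t * lam ^ ((1:ℝ)/3))|
            ≤ ε' * lam ^ ((2:ℝ)/3) →
        |deriv (fun δ => f1FB p A T gamma2 M e nu B th lam t δ) d
            - 6 * xiFB p T gamma2 B t * lam| ≤ ε * lam ∧
        deriv (fun δ => f1FB p A T gamma2 M e nu B th lam t δ) d ≠ 0) ∧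
    ∃ C > 0, ∃ ε' > 0, ∃ lam0 > 0, ∀ lam ∈ Ioo (0:ℝ) lam0, ∀ δ₁ : ℝ → ℝ,
      ContinuousOn δ₁ (Icc 0 T) →
      (∀ t ∈ Icc (0:ℝ) T,
        f1FB p A T gamma2 M e nu B th lam t (δ₁ t) = 0 ∧
        |δ₁ t + (nu/2) * lam ^ ((1:ℝ)/3) * (1 - xiFB p T gamma2 B t * lam ^ ((1:ℝ)/3))|
          ≤ ε' * lam ^ ((2:ℝ)/3)) →
      ∀ t ∈ Icc (0:ℝ) T, ∃ d : ℝ,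
        HasDerivWithinAt δ₁ d (Icc 0 T) t ∧ |d| ≤ C * lam ^ ((2:ℝ)/3) :=
  stmt8_general p A T gamma2 M e nu B th hnu hxi
end

section
/- (Final-time supersolution inequality, interior) Let w(z) = 1/p + Mλ - h(z-θ)/ν with ν > 0, θ ∈ ℝ, M ≥ θ + 1, and h(δ) = (3/2)δ²λ^{2/3} - δ⁴/ν² + (3/2)Bδ²λ^{4/3}. Then for all sufficiently small λ > 0 and all z with |z - θ| ≤ νλ^{1/3} and 0 ≤ z < 1/λ, one has w(z) > (1-λz)^p / p. -/
/-!
With `t = λ^{1/3}`, concavity of `x ↦ x^p/p` at `x = 1` gives `(1-λz)^p/p ≤ 1/p - λz`, so it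
suffices that `h(z-θ)/ν < λ(M + z)`. On `|z-θ| ≤ νt` the quartic term of `h` has the good sign
and the rest is `O(νt⁴)`, while `z ≥ 0` forces `θ ≥ -νt`, hence `M + z ≥ 1 - νt`; so the claim
reduces to `t³(1 - νt) > O(νt⁴)`, true for small `t`.
-/

open Real Set Filter Topology

lemma rpow_div_le_one_div_add_sub_one {p x : ℝ} (hp1 : p < 1) (hp0 : p ≠ 0) (hx : 0 < x) :
    x ^ p / p ≤ 1 / p + (x - 1) := by
  have hlin : (1 / p + (x - 1)) * p = 1 + p * (x - 1) := by field_simp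
  rcases hp0.lt_or_gt with hneg | hpos
  · have hbern : 1 + p * (x - 1) ≤ x ^ p :=
      calc 1 + p * (x - 1) ≤ log x * p + 1 := by nlinarith [log_le_sub_one_of_pos hx]
        _ ≤ x ^ p := by rw [rpow_def_of_pos hx]; exact add_one_le_exp _
    rw [div_le_iff_of_neg hneg]
    linarith
  · have hbern : x ^ p ≤ 1 + p * (x - 1) := by
      simpa using rpow_one_add_le_one_add_mul_self (s := x - 1) (by linarith) hpos.le hp1.le
    rw [div_le_iff₀ hpos]
    linarith

lemma perturbation_div_le {nu B d t : ℝ} (hnu : 0 < nu) (hB : 0 ≤ B) (ht1 : t ≤ 1)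
    (hd : |d| ≤ nu * t) :
    ((3/2) * d ^ 2 * t ^ 2 - d ^ 4 / nu ^ 2 + (3/2) * B * d ^ 2 * t ^ 4) / nu
      ≤ (3/2) * nu * t ^ 4 * (1 + B) := by
  have hd2 : d ^ 2 ≤ nu ^ 2 * t ^ 2 := by
    rw [← mul_pow, ← sq_abs]
    exact pow_le_pow_left₀ (abs_nonneg d) hd 2
  have ht0 : 0 ≤ t := nonneg_of_mul_nonneg_right ((abs_nonneg d).trans hd) hnu
  have ht2 : t ^ 2 ≤ 1 := pow_le_one₀ ht0 ht1
  rw [div_le_iff₀ hnu]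
  have hquartic : 0 ≤ d ^ 4 / nu ^ 2 := by positivity
  have hmain : d ^ 2 * t ^ 2 ≤ nu ^ 2 * t ^ 4 := by nlinarith [sq_nonneg t]
  have hB4 : B * d ^ 2 * t ^ 4 ≤ B * nu ^ 2 * t ^ 4 := by
    have : d ^ 2 ≤ nu ^ 2 := by nlinarith [sq_nonneg nu]
    have := mul_le_mul_of_nonneg_left this hB
    nlinarith [pow_nonneg ht0 4]
  nlinarith

lemma supersolution_cube {p nu B th M t z : ℝ} (hp1 : p < 1) (hp0 : p ≠ 0)
    (hnu : 0 < nu) (hB : 0 ≤ B) (hM : M ≥ th + 1) (ht0 : 0 < t) (ht1 : t ≤ 1)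
    (hsmall : nu * t * (5 + 3 * B) < 2) (hd : |z - th| ≤ nu * t) (hz0 : 0 ≤ z)
    (hz1 : z < 1 / t ^ 3) :
    1 / p + M * t ^ 3
        - ((3/2) * (z - th) ^ 2 * t ^ 2 - (z - th) ^ 4 / nu ^ 2
            + (3/2) * B * (z - th) ^ 2 * t ^ 4) / nu
      > (1 - t ^ 3 * z) ^ p / p := by
  have hx : 0 < 1 - t ^ 3 * z := by
    rw [lt_div_iff₀ (by positivity)] at hz1
    linarith
  have htangent := rpow_div_le_one_div_add_sub_one hp1 hp0 hx
  have hpert := perturbation_div_le hnu hB ht1 hd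
  have hMz : 1 - nu * t ≤ M + z := by linarith [(abs_le.mp hd).2]
  have hgap : (3/2) * nu * t ^ 4 * (1 + B) < t ^ 3 * (1 - nu * t) := by
    nlinarith [pow_pos ht0 3]
  have hcube : t ^ 3 * (1 - nu * t) ≤ t ^ 3 * (M + z) :=
    mul_le_mul_of_nonneg_left hMz (by positivity)
  linarith

lemma rpow_div_three_eq_pow {x : ℝ} (hx : 0 ≤ x) (n : ℕ) :
    x ^ ((n : ℝ) / 3) = (x ^ ((1 : ℝ) / 3)) ^ n := by
  rw [← rpow_mul_natCast hx, one_div_mul_eq_div]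

lemma tendsto_rpow_nhdsGT_zero {q : ℝ} (hq : 0 < q) :
    Tendsto (fun x : ℝ ↦ x ^ q) (𝓝[>] 0) (𝓝 0) := by
  have := (continuousAt_rpow_const 0 q (Or.inr hq.le)).tendsto
  rw [zero_rpow hq.ne'] at this
  exact tendsto_nhdsWithin_of_tendsto_nhds this

/-- Final-time supersolution inequality in the interior: for
`w(z) = 1/p + Mλ - h(z-θ)/ν` with `M ≥ θ + 1`, and all small `λ > 0`,
`w(z) > (1-λz)^p / p` whenever `|z-θ| ≤ νλ^{1/3}`, `0 ≤ z < 1/λ`. -/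
theorem stmt11 (p nu B th M : ℝ) (hp1 : p < 1) (hp0 : p ≠ 0)
    (hnu : 0 < nu) (hB : 0 < B) (hM : M ≥ th + 1) :
    ∃ lam0 > 0, ∀ lam ∈ Ioo (0:ℝ) lam0, ∀ z : ℝ,
      |z - th| ≤ nu * lam ^ ((1:ℝ)/3) → 0 ≤ z → z < 1 / lam →
      1 / p + M * lam
          - ((3/2) * (z - th) ^ 2 * lam ^ ((2:ℝ)/3) - (z - th) ^ 4 / nu ^ 2
              + (3/2) * B * (z - th) ^ 2 * lam ^ ((4:ℝ)/3)) / nu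
        > (1 - lam * z) ^ p / p := by
  have hcube_root := tendsto_rpow_nhdsGT_zero (q := (1:ℝ)/3) (by norm_num)
  have hsmall : ∀ᶠ lam in 𝓝[>] (0:ℝ),
      lam ^ ((1:ℝ)/3) < 1 ∧ nu * lam ^ ((1:ℝ)/3) * (5 + 3 * B) < 2 := by
    refine (hcube_root.eventually_lt_const one_pos).and ?_
    have := (hcube_root.const_mul nu).mul_const (5 + 3 * B)
    rw [mul_zero, zero_mul] at this
    exact this.eventually_lt_const two_pos
  obtain ⟨lam0, hlam0, hsub⟩ := mem_nhdsGT_iff_exists_Ioo_subset.mp hsmall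
  refine ⟨lam0, hlam0, fun lam hlam z hd hz0 hz1 ↦ ?_⟩
  obtain ⟨ht1, htnu⟩ := hsub hlam
  have hlam_nonneg : 0 ≤ lam := hlam.1.le
  have hcube := rpow_div_three_eq_pow hlam_nonneg 3
  rw [show ((3 : ℕ) : ℝ) / 3 = 1 by norm_num, rpow_one] at hcube
  rw [show (2:ℝ) / 3 = ((2 : ℕ) : ℝ) / 3 by norm_num, show (4:ℝ) / 3 = ((4 : ℕ) : ℝ) / 3 by norm_num,
    rpow_div_three_eq_pow hlam_nonneg, rpow_div_three_eq_pow hlam_nonneg]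
  have ht0 : 0 < lam ^ ((1:ℝ)/3) := rpow_pos_of_pos hlam.1 _
  generalize lam ^ ((1:ℝ)/3) = t at *
  subst hcube
  exact supersolution_cube hp1 hp0 hnu hB.le hM ht0 ht1.le htnu hd hz0 hz1
end

section
/- (Drift inequality in the no-trade region) Let w(t,z) = (1/p)e^{pA(T-t)} - γ₂(t)λ^{2/3} ± Mλ - (e^{pA(T-t)}/ν) h(z-θ) where γ₂(t) = γ₂ e^{pA(T-t)}(T-t), γ₂ = ((9/32)(1-p)θ⁴(1-θ)⁴)^{1/3}σ², ν = (12θ²(1-θ)²/(1-p))^{1/3}, h(δ) = (3/2)δ²λ^{2/3} - δ⁴/ν² + (3/2)Bδ²λ^{4/3}. Then for |z-θ| ≤ νλ^{1/3}: -w_t + D w = ∓ pAMλ(1 - σ²(1-p)(z-θ)²/(2A)) + R(t,z,λ), where the leading λ^{2/3} and (z-θ)² terms cancel exactly by the definitions of γ₂ and ν, and |R| ≤ Cλ uniformly in (t,z) for a constant C = 6(σ²/ν)(2νθ|(1-θ)(1-2θ)|+1)+1. -/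
/-!
Write `L = λ^{1/3}`, `E = e^{pA(T-t)} ∈ (0,1]` and `z - θ = ν L d` with `|d| ≤ 1`. After the
derivatives of `w` are computed, `-w_t + D w` minus the claimed main term is a polynomial in
`E, T - t, d, L`. The `∓Mλ` part of `w` produces the main term exactly, and the calibrations
`γ₂ = (1-p)ν²σ²/8`, `(1-p)ν³ = 12θ²(1-θ)²` (equivalent to the definitions of `γ₂` and `ν`) make
the `λ^{2/3}` and `(z-θ)²` terms cancel. What remains is `L³` times the contribution
`3σ²Eθ(1-θ)(1-2θ)d(1-4d²)` of the linear part of `z²(1-z)² - θ²(1-θ)²`, which is at most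
`9σ²θ|(1-θ)(1-2θ)|`, plus `L⁴` times a polynomial, which is bounded on the compact box of
parameters and is therefore absorbed into `λ` once `λ` is small.
-/

open Real Set

/-- `w^±(t,z) = (1/p)e^{pA(T-t)} - γ₂(t)λ^{2/3} ± Mλ - (e^{pA(T-t)}/ν) h(z-θ)`,
with `γ₂(t) = γ₂ e^{pA(T-t)}(T-t)` and sign `e = ±1`. -/
noncomputable def wNT (p A T gamma2 M e nu B lam t z th : ℝ) : ℝ :=
  (1/p) * exp (p * A * (T - t)) - gamma2 * exp (p * A * (T - t)) * (T - t) * lam ^ ((2:ℝ)/3)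
    + e * M * lam - (exp (p * A * (T - t)) / nu) * hFn nu B lam (z - th)

/-- `-w_t + D w`. -/
noncomputable def noTradeOperator (p A sig th : ℝ) (w : ℝ → ℝ → ℝ) (t z : ℝ) : ℝ :=
  -(deriv (fun s => w s z) t)
    + (-p * (A - (1/2) * sig ^ 2 * (1 - p) * (z - th) ^ 2) * w t z
      + (1 - p) * sig ^ 2 * z * (1 - z) * (z - th) * deriv (fun z' => w t z') z
      - (1/2) * sig ^ 2 * z ^ 2 * (1 - z) ^ 2
          * deriv (fun z' => deriv (fun z'' => w t z'') z') z)

section Derivatives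

variable (p A T gamma2 M e nu B lam th : ℝ)

lemma hasDerivAt_hFn (δ : ℝ) :
    HasDerivAt (hFn nu B lam)
      (3 * δ * lam ^ ((2:ℝ)/3) - 4 * δ ^ 3 / nu ^ 2 + 3 * B * δ * lam ^ ((4:ℝ)/3)) δ := by
  have h := (((hasDerivAt_pow 2 δ).const_mul (3/2)).mul_const (lam ^ ((2:ℝ)/3))).sub
    ((hasDerivAt_pow 4 δ).div_const (nu ^ 2)) |>.add
    (((hasDerivAt_pow 2 δ).const_mul ((3/2) * B)).mul_const (lam ^ ((4:ℝ)/3)))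
  exact h.congr_deriv (by push_cast; ring)

lemma hasDerivAt_hFn_deriv (δ : ℝ) :
    HasDerivAt
      (fun δ => 3 * δ * lam ^ ((2:ℝ)/3) - 4 * δ ^ 3 / nu ^ 2 + 3 * B * δ * lam ^ ((4:ℝ)/3))
      (3 * lam ^ ((2:ℝ)/3) - 12 * δ ^ 2 / nu ^ 2 + 3 * B * lam ^ ((4:ℝ)/3)) δ := by
  have h := (((hasDerivAt_id' δ).const_mul 3).mul_const (lam ^ ((2:ℝ)/3))).sub
    ((hasDerivAt_pow 3 δ).const_mul 4 |>.div_const (nu ^ 2)) |>.add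
    (((hasDerivAt_id' δ).const_mul (3 * B)).mul_const (lam ^ ((4:ℝ)/3)))
  exact h.congr_deriv (by push_cast; ring)

lemma deriv_wNT_space (t : ℝ) :
    deriv (fun z => wNT p A T gamma2 M e nu B lam t z th)
      = fun z => -(exp (p * A * (T - t)) / nu) *
          (3 * (z - th) * lam ^ ((2:ℝ)/3) - 4 * (z - th) ^ 3 / nu ^ 2
            + 3 * B * (z - th) * lam ^ ((4:ℝ)/3)) := by
  ext z
  have h := ((hasDerivAt_hFn nu B lam (z - th)).comp z
    ((hasDerivAt_id' z).sub_const th)).const_mul (exp (p * A * (T - t)) / nu) |>.const_sub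
    ((1/p) * exp (p * A * (T - t)) - gamma2 * exp (p * A * (T - t)) * (T - t) * lam ^ ((2:ℝ)/3)
      + e * M * lam)
  exact (h.congr_deriv (by ring)).deriv

lemma deriv_deriv_wNT_space (t z : ℝ) :
    deriv (fun z' => deriv (fun z'' => wNT p A T gamma2 M e nu B lam t z'' th) z') z
      = -(exp (p * A * (T - t)) / nu) *
          (3 * lam ^ ((2:ℝ)/3) - 12 * (z - th) ^ 2 / nu ^ 2 + 3 * B * lam ^ ((4:ℝ)/3)) := by
  rw [deriv_wNT_space]
  have h := ((hasDerivAt_hFn_deriv nu B lam (z - th)).comp z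
    ((hasDerivAt_id' z).sub_const th)).const_mul (-(exp (p * A * (T - t)) / nu))
  exact (h.congr_deriv (by ring)).deriv

lemma deriv_wNT_time (hp : p ≠ 0) (t z : ℝ) :
    deriv (fun s => wNT p A T gamma2 M e nu B lam s z th) t
      = -A * exp (p * A * (T - t))
        + gamma2 * exp (p * A * (T - t)) * (p * A * (T - t) + 1) * lam ^ ((2:ℝ)/3)
        + p * A * (exp (p * A * (T - t)) / nu) * hFn nu B lam (z - th) := by
  have hE :
      HasDerivAt (fun s => exp (p * A * (T - s))) (exp (p * A * (T - t)) * (-(p * A))) t := by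
    simpa using (((hasDerivAt_id' t).const_sub T).const_mul (p * A)).exp
  have h := ((hE.const_mul (1/p)).sub
    (((hE.const_mul gamma2).mul ((hasDerivAt_id' t).const_sub T)).mul_const (lam ^ ((2:ℝ)/3)))
    |>.add_const (e * M * lam)).sub ((hE.div_const nu).mul_const (hFn nu B lam (z - th)))
  exact (h.congr_deriv (by field_simp; ring)).deriv

end Derivatives

lemma cube_rpow_div_three {L : ℝ} (hL : 0 ≤ L) (k : ℕ) : (L ^ 3) ^ ((k : ℝ) / 3) = L ^ k := by
  rw [← rpow_natCast_mul hL, ← rpow_natCast]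
  congr 1
  field_simp
  ring

lemma rpow_one_third_pow_three {x : ℝ} (hx : 0 ≤ x) : (x ^ ((1:ℝ)/3)) ^ 3 = x := by
  rw [one_div]
  exact_mod_cast rpow_inv_natCast_pow hx three_ne_zero

section Calibration

variable {p th sig gamma2 nu : ℝ}

lemma calibration_nu_pos (hp1 : p < 1) (hth : th ≠ 0) (hth1 : th ≠ 1)
    (hnu : nu = (12 * th ^ 2 * (1 - th) ^ 2 / (1 - p)) ^ ((1:ℝ)/3)) : 0 < nu := by
  have : 1 - th ≠ 0 := sub_ne_zero.mpr (Ne.symm hth1)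
  have : 0 < 1 - p := sub_pos.mpr hp1
  rw [hnu]
  positivity

lemma calibration_nu_cube (hp1 : p < 1)
    (hnu : nu = (12 * th ^ 2 * (1 - th) ^ 2 / (1 - p)) ^ ((1:ℝ)/3)) :
    (1 - p) * nu ^ 3 = 12 * th ^ 2 * (1 - th) ^ 2 := by
  have h1p : 0 < 1 - p := sub_pos.mpr hp1
  rw [hnu, rpow_one_third_pow_three (by positivity)]
  field_simp

lemma calibration_gamma2 (hp1 : p < 1)
    (hnu : nu = (12 * th ^ 2 * (1 - th) ^ 2 / (1 - p)) ^ ((1:ℝ)/3))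
    (hgamma2 : gamma2 = ((9/32) * (1 - p) * th ^ 4 * (1 - th) ^ 4) ^ ((1:ℝ)/3) * sig ^ 2) :
    gamma2 = (1 - p) * nu ^ 2 / 8 * sig ^ 2 := by
  have h1p : 0 < 1 - p := sub_pos.mpr hp1
  have hcube : (9/32) * (1 - p) * th ^ 4 * (1 - th) ^ 4 = ((1 - p) * nu ^ 2 / 8) ^ 3 := by
    rw [show ((1 - p) * nu ^ 2 / 8) ^ 3 = (1 - p) * ((1 - p) * nu ^ 3) ^ 2 / 512 by ring,
      calibration_nu_cube hp1 hnu]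
    ring
  rw [hgamma2, hcube, one_div, show (3:ℝ)⁻¹ = ((3:ℕ):ℝ)⁻¹ by norm_num,
    pow_rpow_inv_natCast (by positivity) three_ne_zero]

end Calibration

noncomputable def noTradeLeading (sig th E d : ℝ) : ℝ :=
  3 * sig ^ 2 * E * th * (1 - th) * (1 - 2 * th) * d * (1 - 4 * d ^ 2)

/-- The coefficient of `L⁴` in the residual, for `E = e^{pA(T-t)}`, `s = T - t` and
`z - θ = ν L d`. -/
noncomputable def noTradeRemainder (p sig th B nu E s d L : ℝ) : ℝ :=
  let z := th + nu * L * d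
  (3/2) * sig ^ 2 * nu * E * d ^ 2 * (1 - 4 * d ^ 2)
      * ((1 - 2 * th - nu * L * d) ^ 2 - 2 * th * (1 - th))
    + (3/2) * sig ^ 2 * B * E / nu * z ^ 2 * (1 - z) ^ 2
    - (1/16) * p * (1 - p) ^ 2 * sig ^ 4 * nu ^ 4 * E * s * d ^ 2
    - (1/2) * p * (1 - p) * sig ^ 2 * nu ^ 3 * E * d ^ 2 * L ^ 2
        * ((3/2) * d ^ 2 - d ^ 4 + (3/2) * B * L ^ 2 * d ^ 2)
    - (1 - p) * sig ^ 2 * nu * E * z * (1 - z) * (3 * d ^ 2 - 4 * d ^ 4 + 3 * B * L ^ 2 * d ^ 2)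

lemma abs_noTradeLeading_le {sig th E d : ℝ} (hth : 0 ≤ th) (hE : E ∈ Icc 0 1)
    (hd : d ∈ Icc (-1) 1) :
    |noTradeLeading sig th E d| ≤ 9 * sig ^ 2 * th * |(1 - th) * (1 - 2 * th)| := by
  have hd1 : |d| ≤ 1 := abs_le.mpr hd
  have hd2 : |1 - 4 * d ^ 2| ≤ 3 := by
    have : d ^ 2 ≤ 1 := sq_le_one_iff_abs_le_one d |>.mpr hd1
    exact abs_le.mpr ⟨by linarith, by nlinarith⟩
  have hE1 : |E| ≤ 1 := by rw [abs_of_nonneg hE.1]; exact hE.2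
  calc |noTradeLeading sig th E d|
      = 3 * sig ^ 2 * th * |(1 - th) * (1 - 2 * th)| * (|E| * |d| * |1 - 4 * d ^ 2|) := by
        simp only [noTradeLeading, abs_mul, abs_of_nonneg hth, abs_of_nonneg (sq_nonneg sig)]
        norm_num
        ring
    _ ≤ 3 * sig ^ 2 * th * |(1 - th) * (1 - 2 * th)| * (1 * 1 * 3) := by gcongr
    _ = 9 * sig ^ 2 * th * |(1 - th) * (1 - 2 * th)| := by ring

lemma exists_abs_noTradeRemainder_le (p sig th B nu T : ℝ) :
    ∃ C, ∀ E ∈ Icc (0:ℝ) 1, ∀ s ∈ Icc 0 T, ∀ d ∈ Icc (-1:ℝ) 1, ∀ L ∈ Icc (0:ℝ) 1,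
      |noTradeRemainder p sig th B nu E s d L| ≤ C := by
  have hK : IsCompact (Icc (0:ℝ) 1 ×ˢ Icc 0 T ×ˢ Icc (-1:ℝ) 1 ×ˢ Icc (0:ℝ) 1) :=
    isCompact_Icc.prod (isCompact_Icc.prod (isCompact_Icc.prod isCompact_Icc))
  have hcont : Continuous fun x : ℝ × ℝ × ℝ × ℝ =>
      noTradeRemainder p sig th B nu x.1 x.2.1 x.2.2.1 x.2.2.2 := by
    unfold noTradeRemainder
    fun_prop
  obtain ⟨C, hC⟩ := hK.exists_bound_of_continuousOn hcont.continuousOn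
  exact ⟨C, fun E hE s hs d hd L hL => hC (E, s, d, L) ⟨hE, hs, hd, hL⟩⟩

section Expansion

variable {p A T gamma2 M e nu B sig th : ℝ}

theorem noTradeOperator_wNT_sub_eq (hp : p ≠ 0) (hA : A ≠ 0) (hnu : nu ≠ 0)
    (hγ : gamma2 = (1 - p) * nu ^ 2 / 8 * sig ^ 2)
    (hν : (1 - p) * nu ^ 3 = 12 * th ^ 2 * (1 - th) ^ 2)
    {L : ℝ} (hL : 0 ≤ L) (t z d : ℝ) (hz : z - th = nu * L * d) :
    noTradeOperator p A sig th (fun t z => wNT p A T gamma2 M e nu B (L ^ 3) t z th) t z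
        - (-e * p * A * M * L ^ 3 * (1 - sig ^ 2 * (1 - p) * (z - th) ^ 2 / (2 * A)))
      = L ^ 3 * (noTradeLeading sig th (exp (p * A * (T - t))) d
          + L * noTradeRemainder p sig th B nu (exp (p * A * (T - t))) (T - t) d L) := by
  have h2 : (L ^ 3) ^ ((2:ℝ)/3) = L ^ 2 := by exact_mod_cast cube_rpow_div_three hL 2
  have h4 : (L ^ 3) ^ ((4:ℝ)/3) = L ^ 4 := by exact_mod_cast cube_rpow_div_three hL 4
  simp only [noTradeOperator]
  rw [deriv_deriv_wNT_space, deriv_wNT_space, deriv_wNT_time _ _ _ _ _ _ _ _ _ _ hp]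
  simp only [wNT, hFn, noTradeLeading, noTradeRemainder, h2, h4]
  obtain rfl : z = th + nu * L * d := by linear_combination hz
  subst hγ
  -- `hν` enters only through `½σ²θ²(1-θ)² w_zz`, where it cancels the `λ^{2/3}` and `(z-θ)²`
  -- terms; this fixes the coefficient.
  linear_combination (norm := skip)
    (-(1/8) * sig ^ 2 * exp (p * A * (T - t)) * L ^ 2 * (1 - 4 * d ^ 2) / nu) * hν
  field_simp
  ring

end Expansion

theorem abs_noTradeOperator_wNT_sub_le {p A T gamma2 M e nu B sig th C : ℝ}
    (hp : p ≠ 0) (hpA : p * A < 0) (hth : 0 ≤ th) (hnu : 0 < nu)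
    (hγ : gamma2 = (1 - p) * nu ^ 2 / 8 * sig ^ 2)
    (hν : (1 - p) * nu ^ 3 = 12 * th ^ 2 * (1 - th) ^ 2)
    (hC : ∀ E ∈ Icc (0:ℝ) 1, ∀ s ∈ Icc 0 T, ∀ d ∈ Icc (-1:ℝ) 1, ∀ L ∈ Icc (0:ℝ) 1,
      |noTradeRemainder p sig th B nu E s d L| ≤ C)
    {L : ℝ} (hL : 0 < L) (hL1 : L ≤ 1) (hCL : C * L ≤ 1)
    {t z : ℝ} (ht : t ∈ Icc 0 T) (hz : |z - th| ≤ nu * L) :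
    |noTradeOperator p A sig th (fun t z => wNT p A T gamma2 M e nu B (L ^ 3) t z th) t z
        - (-e * p * A * M * L ^ 3 * (1 - sig ^ 2 * (1 - p) * (z - th) ^ 2 / (2 * A)))|
      ≤ (6 * (sig ^ 2 / nu) * (2 * nu * th * |(1 - th) * (1 - 2 * th)| + 1) + 1) * L ^ 3 := by
  have hA : A ≠ 0 := by rintro rfl; simp at hpA
  have hνL : 0 < nu * L := mul_pos hnu hL
  set d := (z - th) / (nu * L)
  have hzd : z - th = nu * L * d := (mul_div_cancel₀ _ hνL.ne').symm
  have hd : d ∈ Icc (-1) 1 :=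
    abs_le.mp (by rw [abs_div, abs_of_pos hνL]; exact div_le_one_of_le₀ hz hνL.le)
  have hE : exp (p * A * (T - t)) ∈ Icc 0 1 :=
    ⟨(exp_pos _).le,
      exp_le_one_iff.mpr (mul_nonpos_of_nonpos_of_nonneg hpA.le (by linarith [ht.2]))⟩
  have hlead := abs_noTradeLeading_le (sig := sig) hth hE hd
  have hrem := hC _ hE (T - t) ⟨by linarith [ht.2], by linarith [ht.1]⟩ d hd L ⟨hL.le, hL1⟩
  have hlead_le : 9 * sig ^ 2 * th * |(1 - th) * (1 - 2 * th)|
      ≤ 6 * (sig ^ 2 / nu) * (2 * nu * th * |(1 - th) * (1 - 2 * th)| + 1) := by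
    have : 6 * (sig ^ 2 / nu) * (2 * nu * th * |(1 - th) * (1 - 2 * th)| + 1)
        = 12 * sig ^ 2 * th * |(1 - th) * (1 - 2 * th)| + 6 * (sig ^ 2 / nu) := by
      field_simp
      ring
    rw [this]
    have : 0 ≤ sig ^ 2 * th * |(1 - th) * (1 - 2 * th)| := by positivity
    have : 0 ≤ sig ^ 2 / nu := by positivity
    linarith
  rw [noTradeOperator_wNT_sub_eq hp hA hnu.ne' hγ hν hL.le t z d hzd, abs_mul,
    abs_of_pos (by positivity), mul_comm]
  gcongr
  calc _ ≤ |noTradeLeading sig th (exp (p * A * (T - t))) d|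
        + L * |noTradeRemainder p sig th B nu (exp (p * A * (T - t))) (T - t) d L| := by
        exact (abs_add_le _ _).trans_eq (by rw [abs_mul, abs_of_pos hL])
    _ ≤ _ := by linarith [mul_le_mul_of_nonneg_left hrem hL.le]

theorem stmt13_general (p A T sig th M B e gamma2 nu : ℝ)
    (hp1 : p < 1) (hp0 : p ≠ 0) (hpA : p * A < 0) (hth : 0 < th) (hth1 : th ≠ 1)
    (hgamma2 : gamma2 = ((9/32) * (1 - p) * th ^ 4 * (1 - th) ^ 4) ^ ((1:ℝ)/3) * sig ^ 2)
    (hnu : nu = (12 * th ^ 2 * (1 - th) ^ 2 / (1 - p)) ^ ((1:ℝ)/3)) :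
    ∃ lam0 > 0, ∀ lam ∈ Ioo (0:ℝ) lam0, ∀ t ∈ Icc (0:ℝ) T, ∀ z : ℝ,
      |z - th| ≤ nu * lam ^ ((1:ℝ)/3) →
      |(-(deriv (fun s => wNT p A T gamma2 M e nu B lam s z th) t)
          + (-p * (A - (1/2) * sig ^ 2 * (1 - p) * (z - th) ^ 2)
                * wNT p A T gamma2 M e nu B lam t z th
              + (1 - p) * sig ^ 2 * z * (1 - z) * (z - th)
                  * deriv (fun z' => wNT p A T gamma2 M e nu B lam t z' th) z
              - (1/2) * sig ^ 2 * z ^ 2 * (1 - z) ^ 2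
                  * deriv (fun z' => deriv (fun z'' => wNT p A T gamma2 M e nu B lam t z'' th) z') z))
        - (-(e) * p * A * M * lam
            * (1 - sig ^ 2 * (1 - p) * (z - th) ^ 2 / (2 * A)))|
        ≤ (6 * (sig ^ 2 / nu) * (2 * nu * th * |(1 - th) * (1 - 2 * th)| + 1) + 1) * lam := by
  obtain ⟨C, hC⟩ := exists_abs_noTradeRemainder_le p sig th B nu T
  refine ⟨(1 / (|C| + 1)) ^ 3, by positivity, fun lam hlam t ht z hz => ?_⟩
  obtain ⟨L, hL, rfl⟩ : ∃ L, 0 < L ∧ lam = L ^ 3 :=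
    ⟨lam ^ ((1:ℝ)/3), rpow_pos_of_pos hlam.1 _, (rpow_one_third_pow_three hlam.1.le).symm⟩
  rw [show (L ^ 3) ^ ((1:ℝ)/3) = L by simpa using cube_rpow_div_three hL.le 1] at hz
  have hLC : L * (|C| + 1) < 1 :=
    (lt_div_iff₀ (by positivity)).mp (lt_of_pow_lt_pow_left₀ 3 (by positivity) hlam.2)
  exact abs_noTradeOperator_wNT_sub_le hp0 hpA hth.le (calibration_nu_pos hp1 hth.ne' hth1 hnu)
    (calibration_gamma2 hp1 hnu hgamma2) (calibration_nu_cube hp1 hnu) hC hL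
    (by nlinarith [abs_nonneg C]) (by nlinarith [le_abs_self C]) ht hz

/-- Drift inequality in the no-trade region:
`-w_t + D w = ∓ pAMλ(1 - σ²(1-p)(z-θ)²/(2A)) + R` with `|R| ≤ Cλ`,
`C = 6(σ²/ν)(2νθ|(1-θ)(1-2θ)|+1)+1`, uniformly for `t ∈ [0,T]`, `|z-θ| ≤ νλ^{1/3}`. -/
theorem stmt13 (p A T sig th M B e gamma2 nu : ℝ)
    (hp1 : p < 1) (hp0 : p ≠ 0) (hpA : p * A < 0) (hth : 0 < th) (hth1 : th ≠ 1)
    (hsig : 0 < sig) (hT : 0 < T) (hB : 0 < B) (hM : 0 < M) (he : e = 1 ∨ e = -1)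
    (hgamma2 : gamma2 = ((9/32) * (1 - p) * th ^ 4 * (1 - th) ^ 4) ^ ((1:ℝ)/3) * sig ^ 2)
    (hnu : nu = (12 * th ^ 2 * (1 - th) ^ 2 / (1 - p)) ^ ((1:ℝ)/3)) :
    ∃ lam0 > 0, ∀ lam ∈ Ioo (0:ℝ) lam0, ∀ t ∈ Icc (0:ℝ) T, ∀ z : ℝ,
      |z - th| ≤ nu * lam ^ ((1:ℝ)/3) →
      |(-(deriv (fun s => wNT p A T gamma2 M e nu B lam s z th) t)
          + (-p * (A - (1/2) * sig ^ 2 * (1 - p) * (z - th) ^ 2)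
                * wNT p A T gamma2 M e nu B lam t z th
              + (1 - p) * sig ^ 2 * z * (1 - z) * (z - th)
                  * deriv (fun z' => wNT p A T gamma2 M e nu B lam t z' th) z
              - (1/2) * sig ^ 2 * z ^ 2 * (1 - z) ^ 2
                  * deriv (fun z' => deriv (fun z'' => wNT p A T gamma2 M e nu B lam t z'' th) z') z))
        - (-(e) * p * A * M * lam
            * (1 - sig ^ 2 * (1 - p) * (z - th) ^ 2 / (2 * A)))|
        ≤ (6 * (sig ^ 2 / nu) * (2 * nu * th * |(1 - th) * (1 - 2 * th)| + 1) + 1) * lam :=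
  stmt13_general p A T sig th M B e gamma2 nu hp1 hp0 hpA hth hth1 hgamma2 hnu
end
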